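/- Let E > 0 and a ∈ ℝ, and let (P,L) ∈ ℝ³ × ℝ³ satisfy |P|² = 2E and P·L = 0. Define x = P and y = (P × L)/|P|². Then: (i) x·y = 0; (ii) x × y = -L; (iii) |L|² = |x|² |y|² = 2E |y|²; and (iv) G(P,L) = |L|² - a²(P₁² + P₂²) = 2E(y₁² + y₂² + y₃²) - a²(x₁² + x₂²). Hence under the map (P,L) ↦ (x,y) the Hamiltonian G of the spheroidal harmonics integrable system becomes (up to the symplectic scaling to the unit sphere) the Hamiltonian of the C. Neumann system of a particle on the sphere with rotationally symmetric harmonic potential. -/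

import Mathlib

/-! For `w` orthogonal to `v` with `v ⬝ᵥ v ≠ 0`, the vector `y = (v ⬝ᵥ v)⁻¹ • v ⨯₃ w` inverts `w ↦ v ⨯₃ w`
up to sign: by the BAC-CAB rule `v ⨯₃ (v ⨯₃ w) = (v ⬝ᵥ w) • v - (v ⬝ᵥ v) • w = -(v ⬝ᵥ v) • w`,
and by Lagrange's identity `|v ⨯₃ w|² = |v|²|w|² - (v ⬝ᵥ w)² = |v|²|w|²`, so `|w|² = |v|²|y|²`;
on `|P|² = 2E` this turns `|L|²` into the kinetic term `2E|y|²` of the Neumann system. -/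

noncomputable section

/-- The cross product in `ℝ³`. -/
def cross3 (v w : Fin 3 → ℝ) : Fin 3 → ℝ :=
  ![v 1 * w 2 - v 2 * w 1, v 2 * w 0 - v 0 * w 2, v 0 * w 1 - v 1 * w 0]

/-- The dot product in `ℝ³`. -/
def dot3 (v w : Fin 3 → ℝ) : ℝ := v 0 * w 0 + v 1 * w 1 + v 2 * w 2

open Matrix

section

variable {K : Type*} [Field K] {v w : Fin 3 → K}

theorem cross_inv_smul_cross_of_dotProduct_eq_zero (hv : v ⬝ᵥ v ≠ 0) (hvw : v ⬝ᵥ w = 0) :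
    v ⨯₃ ((v ⬝ᵥ v)⁻¹ • v ⨯₃ w) = -w := by
  rw [map_smul, cross_cross_eq_smul_sub_smul', hvw, zero_smul, zero_sub, smul_neg,
    inv_smul_smul₀ hv]

theorem dotProduct_self_eq_mul_of_dotProduct_eq_zero (hv : v ⬝ᵥ v ≠ 0) (hvw : v ⬝ᵥ w = 0) :
    w ⬝ᵥ w = v ⬝ᵥ v * ((v ⬝ᵥ v)⁻¹ • v ⨯₃ w ⬝ᵥ (v ⬝ᵥ v)⁻¹ • v ⨯₃ w) := by
  rw [smul_dotProduct, dotProduct_smul, cross_dot_cross, hvw, smul_eq_mul, smul_eq_mul]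
  field_simp
  ring

end

theorem cross3_eq_crossProduct (v w : Fin 3 → ℝ) : cross3 v w = v ⨯₃ w := by
  rw [cross_apply]
  rfl

theorem dot3_eq_dotProduct (v w : Fin 3 → ℝ) : dot3 v w = v ⬝ᵥ w := by
  rw [vec3_dotProduct]
  rfl

theorem dot3_self_eq_sum_sq (v : Fin 3 → ℝ) : dot3 v v = v 0 ^ 2 + v 1 ^ 2 + v 2 ^ 2 := by
  unfold dot3
  ring

/-- On the reduced phase space `|P|² = 2E`, `P·L = 0`, the map
`(P,L) ↦ (x,y) = (P, (P × L)/|P|²)` satisfies: (i) `x·y = 0`; (ii) `x × y = -L`;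
(iii) `|L|² = |x|²|y|² = 2E|y|²`; (iv) `G(P,L) = |L|² - a²(P₁²+P₂²)
= 2E(y₁²+y₂²+y₃²) - a²(x₁²+x₂²)`, the Hamiltonian of the C. Neumann system. -/
theorem to_neumann (E a : ℝ) (hE : 0 < E) (P L : Fin 3 → ℝ)
    (hP : dot3 P P = 2 * E) (hPL : dot3 P L = 0) :
    let x : Fin 3 → ℝ := P
    let y : Fin 3 → ℝ := (1 / dot3 P P) • cross3 P L
    dot3 x y = 0 ∧
    cross3 x y = -L ∧
    dot3 L L = dot3 x x * dot3 y y ∧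
    dot3 L L = 2 * E * dot3 y y ∧
    dot3 L L - a ^ 2 * ((P 0) ^ 2 + (P 1) ^ 2)
      = 2 * E * ((y 0) ^ 2 + (y 1) ^ 2 + (y 2) ^ 2) - a ^ 2 * ((x 0) ^ 2 + (x 1) ^ 2) := by
  intro x y
  have hy : y = (P ⬝ᵥ P)⁻¹ • P ⨯₃ L := by
    simp only [y, one_div, cross3_eq_crossProduct, dot3_eq_dotProduct]
  have hPP : P ⬝ᵥ P ≠ 0 := by
    rw [← dot3_eq_dotProduct, hP]
    positivity
  rw [dot3_eq_dotProduct] at hPL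
  have hLL : dot3 L L = dot3 x x * dot3 y y := by
    simpa only [x, hy, dot3_eq_dotProduct] using
      dotProduct_self_eq_mul_of_dotProduct_eq_zero hPP hPL
  have hLL' : dot3 L L = 2 * E * dot3 y y := by rw [hLL, hP]
  refine ⟨?_, ?_, hLL, hLL', ?_⟩
  · rw [dot3_eq_dotProduct, hy, dotProduct_smul, dot_self_cross, smul_zero]
  · rw [cross3_eq_crossProduct, hy]
    exact cross_inv_smul_cross_of_dotProduct_eq_zero hPP hPL
  · rw [← dot3_self_eq_sum_sq, ← hLL']
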